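/- arXiv:2003.09071 — 2 statements merged into one kernel-verified Lean document; each statement's English description precedes it below -/
import Mathlib

section
/- Suppose g has a positive and finite limit at infinity: g(∞) := lim_{r→∞} g(r) exists with 0 < g(∞) < ∞. Then for any Borel measure μ on ℝⁿ with 0 < μ(ℝⁿ) < ∞ (not necessarily compactly supported), there exists a point x_c ∈ ℝⁿ with V(x_c) = 0. -/
/-!
`V` is the gradient of `W(x) = ∫ (G(|x+y|) - G(|y|)) dμ(y)`, where `G' = g` and `G(0) = 0`.
Since `g ≥ g(∞)/2` far out, `G` grows linearly; fixing a ball that carries all but a small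
fraction of the mass of `μ`, this makes `W` grow linearly at infinity. Hence `W` attains a global
minimum, and `V = ∇W` vanishes there.
-/

open MeasureTheory Filter Set Topology

/-- The radial vector field `v(y) = g(|y|) y/|y|` (with `v(0)=0`). -/
noncomputable def radialField {n : ℕ} (g : ℝ → ℝ)
    (y : EuclideanSpace ℝ (Fin n)) : EuclideanSpace ℝ (Fin n) :=
  (g ‖y‖ / ‖y‖) • y

/-- The vector field `V(x) = ∫ v(x+y) dμ(y)`. -/
noncomputable def VField {n : ℕ} (g : ℝ → ℝ)
    (μ : Measure (EuclideanSpace ℝ (Fin n)))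
    (x : EuclideanSpace ℝ (Fin n)) : EuclideanSpace ℝ (Fin n) :=
  ∫ y, radialField g (x + y) ∂μ

open Asymptotics Metric

theorem exists_abs_le_of_continuousOn_Ici_of_tendsto {g : ℝ → ℝ} {a l : ℝ}
    (hg : ContinuousOn g (Ici a)) (hlim : Tendsto g atTop (𝓝 l)) :
    ∃ M, ∀ t, a ≤ t → |g t| ≤ M := by
  obtain ⟨R, hR⟩ :=
    eventually_atTop.1 (hlim.abs.eventually (eventually_le_nhds (lt_add_one |l|)))
  obtain ⟨C, hC⟩ := isCompact_Icc.exists_bound_of_continuousOn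
    (hg.mono (Icc_subset_Ici_self : Icc a R ⊆ Ici a))
  refine ⟨max C (|l| + 1), fun t ht => ?_⟩
  rcases le_total t R with htR | hRt
  · exact (hC t ⟨ht, htR⟩).trans (le_max_left _ _)
  · exact (hR t hRt).trans (le_max_right _ _)

theorem tendsto_measureReal_compl_closedBall_atTop {α : Type*} [PseudoMetricSpace α]
    [MeasurableSpace α] [OpensMeasurableSpace α] (μ : Measure α) [IsFiniteMeasure μ] (x : α) :
    Tendsto (fun r => μ.real (closedBall x r)ᶜ) atTop (𝓝 0) := by
  have h := tendsto_measure_iInter_atTop (μ := μ) (s := fun r : ℝ => (closedBall x r)ᶜ)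
    (fun _ => measurableSet_closedBall.compl.nullMeasurableSet)
    (fun _ _ hrs => compl_subset_compl.2 (closedBall_subset_closedBall hrs))
    ⟨0, measure_ne_top μ _⟩
  have hempty : ⋂ r : ℝ, (closedBall x r)ᶜ = ∅ :=
    iInter_eq_empty_iff.2 fun y => ⟨dist y x, not_not.2 (mem_closedBall.2 le_rfl)⟩
  rw [hempty, measure_empty] at h
  exact (ENNReal.tendsto_toReal ENNReal.zero_ne_top).comp h

theorem hasFDerivAt_norm_of_ne_zero {F : Type*} [NormedAddCommGroup F] [InnerProductSpace ℝ F]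
    {x : F} (hx : x ≠ 0) : HasFDerivAt (‖·‖) (‖x‖⁻¹ • innerSL ℝ x) x := by
  have h := (hasStrictFDerivAt_norm_sq x).hasFDerivAt.sqrt (by positivity)
  simp only [Real.sqrt_sq (norm_nonneg _)] at h
  convert h using 1
  have : ‖x‖ ≠ 0 := norm_ne_zero_iff.2 hx
  ext v
  simp only [smul_apply, smul_eq_mul, two_smul, add_apply]
  field_simp
  ring

theorem abs_primitive_sub_le {g : ℝ → ℝ} {M : ℝ} (hg : Continuous g)
    (hM : ∀ t, |g t| ≤ M) (a b : ℝ) :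
    |(∫ t in (0 : ℝ)..a, g t) - ∫ t in (0 : ℝ)..b, g t| ≤ M * |a - b| := by
  rw [intervalIntegral.integral_interval_sub_left (hg.intervalIntegrable _ _)
    (hg.intervalIntegrable _ _)]
  exact intervalIntegral.norm_integral_le_of_norm_le_const fun t _ =>
    (Real.norm_eq_abs _).trans_le (hM t)

theorem mul_sub_le_primitive {g : ℝ → ℝ} {M c R r : ℝ} (hg : Continuous g)
    (hM : ∀ t, |g t| ≤ M) (hc : 0 ≤ c) (hR : 0 ≤ R) (hcg : ∀ t, R ≤ t → c ≤ g t) (hr : 0 ≤ r) :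
    c * r - (c + M) * R ≤ ∫ t in (0 : ℝ)..r, g t := by
  have hM0 : 0 ≤ M := (abs_nonneg _).trans (hM 0)
  have hlip : ∀ s, 0 ≤ s → -(M * s) ≤ ∫ t in (0 : ℝ)..s, g t := fun s hs => by
    have := abs_primitive_sub_le hg hM s 0
    rw [intervalIntegral.integral_same, sub_zero, sub_zero, abs_of_nonneg hs] at this
    exact (abs_le.1 this).1
  rcases le_total r R with hrR | hRr
  · nlinarith [hlip r hr]
  · have htail : c * (r - R) ≤ ∫ t in R..r, g t := by
      calc c * (r - R) = ∫ _ in R..r, c := by simp [mul_comm]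
        _ ≤ ∫ t in R..r, g t := intervalIntegral.integral_mono_on hRr intervalIntegrable_const
          (hg.intervalIntegrable R r) fun t ht => hcg t ht.1
    rw [← intervalIntegral.integral_add_adjacent_intervals (hg.intervalIntegrable 0 R)
      (hg.intervalIntegrable R r)]
    nlinarith [hlip R hR]

section RadialPotential

variable {F : Type*} [NormedAddCommGroup F] {g : ℝ → ℝ}

noncomputable def radialPotential (g : ℝ → ℝ) (z : F) : ℝ := ∫ t in (0 : ℝ)..‖z‖, g t

theorem hasFDerivAt_radialPotential [InnerProductSpace ℝ F] (hg : Continuous g) (hg0 : g 0 = 0)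
    (x : F) :
    HasFDerivAt (radialPotential g) ((g ‖x‖ / ‖x‖) • innerSL ℝ x) x := by
  have hG : ∀ r, HasDerivAt (fun r => ∫ t in (0 : ℝ)..r, g t) (g r) r := fun r =>
    intervalIntegral.integral_hasDerivAt_right (hg.intervalIntegrable _ _)
      hg.stronglyMeasurable.stronglyMeasurableAtFilter hg.continuousAt
  rcases eq_or_ne x 0 with rfl | hx
  · -- `G'(0) = g 0 = 0`, so `G ‖h‖ = o(‖h‖)`
    have hG0 := hG 0
    rw [hg0, hasDerivAt_iff_isLittleO_nhds_zero] at hG0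
    simp only [zero_add, intervalIntegral.integral_same, sub_zero, smul_zero] at hG0
    rw [hasFDerivAt_iff_isLittleO_nhds_zero]
    simpa [radialPotential, Function.comp_def] using
      isLittleO_norm_right.1 (hG0.comp_tendsto (tendsto_norm_zero (E := F)))
  · rw [div_eq_mul_inv, mul_smul]
    exact (hG ‖x‖).comp_hasFDerivAt x (hasFDerivAt_norm_of_ne_zero hx)

theorem abs_radialPotential_add_sub_le {M : ℝ} (hg : Continuous g) (hM : ∀ t, |g t| ≤ M)
    (x y : F) : |radialPotential g (x + y) - radialPotential g y| ≤ M * ‖x‖ := by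
  have hM0 : 0 ≤ M := (abs_nonneg _).trans (hM 0)
  calc |radialPotential g (x + y) - radialPotential g y| ≤ M * |‖x + y‖ - ‖y‖| :=
        abs_primitive_sub_le hg hM _ _
    _ ≤ M * ‖x‖ := by
      gcongr
      simpa using abs_norm_sub_norm_le (x + y) y

end RadialPotential

section VFieldPotential

variable {n : ℕ} {g : ℝ → ℝ} {M : ℝ} {μ : Measure (EuclideanSpace ℝ (Fin n))}

theorem innerSL_radialField (g : ℝ → ℝ) (z : EuclideanSpace ℝ (Fin n)) :
    innerSL ℝ (radialField g z) = (g ‖z‖ / ‖z‖) • innerSL ℝ z := by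
  simp [radialField]

theorem norm_radialField_le (g : ℝ → ℝ) (z : EuclideanSpace ℝ (Fin n)) :
    ‖radialField g z‖ ≤ |g ‖z‖| := by
  rcases eq_or_ne z 0 with rfl | hz
  · simp [radialField]
  · rw [radialField, norm_smul, Real.norm_eq_abs, abs_div, abs_norm,
      div_mul_cancel₀ _ (norm_ne_zero_iff.2 hz)]

theorem continuous_radialField (hg : Continuous g) (hg0 : g 0 = 0) :
    Continuous (radialField (n := n) g) := by
  refine continuous_iff_continuousAt.2 fun x => ?_
  rcases eq_or_ne x 0 with rfl | hx
  · have hlim : Tendsto (fun z : EuclideanSpace ℝ (Fin n) => |g ‖z‖|) (𝓝 0) (𝓝 0) := by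
      simpa [hg0] using (hg.comp continuous_norm).abs.tendsto (0 : EuclideanSpace ℝ (Fin n))
    simpa [ContinuousAt, radialField] using squeeze_zero_norm (norm_radialField_le g) hlim
  · exact ((hg.comp continuous_norm).continuousAt.div continuous_norm.continuousAt
      (norm_ne_zero_iff.2 hx)).smul continuousAt_id

/-- A potential of `VField g μ`: subtracting `radialPotential g y` keeps the integrand bounded by
`M * ‖x‖`, so no moment of `μ` is needed. -/
noncomputable def vFieldPotential (g : ℝ → ℝ) (μ : Measure (EuclideanSpace ℝ (Fin n)))
    (x : EuclideanSpace ℝ (Fin n)) : ℝ :=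
  ∫ y, (radialPotential g (x + y) - radialPotential g y) ∂μ

variable [IsFiniteMeasure μ]

theorem integrable_radialField_add (hg : Continuous g) (hg0 : g 0 = 0) (hM : ∀ t, |g t| ≤ M)
    (x : EuclideanSpace ℝ (Fin n)) : Integrable (fun y => radialField g (x + y)) μ :=
  .of_bound ((continuous_radialField hg hg0).comp (continuous_const_add x)).aestronglyMeasurable M
    (.of_forall fun _ => (norm_radialField_le g _).trans (hM _))

theorem integrable_radialPotential_add_sub (hg : Continuous g) (hM : ∀ t, |g t| ≤ M)
    (x : EuclideanSpace ℝ (Fin n)) :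
    Integrable (fun y => radialPotential g (x + y) - radialPotential g y) μ := by
  have hG : Continuous (radialPotential (F := EuclideanSpace ℝ (Fin n)) g) :=
    (intervalIntegral.continuous_primitive (fun _ _ => hg.intervalIntegrable _ _) 0).comp
      continuous_norm
  exact .of_bound ((hG.comp (continuous_const_add x)).sub hG).aestronglyMeasurable (M * ‖x‖)
    (.of_forall fun y => abs_radialPotential_add_sub_le hg hM x y)

theorem hasFDerivAt_vFieldPotential (hg : Continuous g) (hg0 : g 0 = 0) (hM : ∀ t, |g t| ≤ M)
    (x : EuclideanSpace ℝ (Fin n)) :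
    HasFDerivAt (vFieldPotential g μ) (innerSL ℝ (VField g μ x)) x := by
  have hderiv :
      HasFDerivAt (vFieldPotential g μ) (∫ y, innerSL ℝ (radialField g (x + y)) ∂μ) x := by
    refine hasFDerivAt_integral_of_dominated_of_fderiv_le (bound := fun _ => M)
      (F' := fun x' y => innerSL ℝ (radialField g (x' + y))) univ_mem
      (.of_forall fun x' => (integrable_radialPotential_add_sub hg hM x').aestronglyMeasurable)
      (integrable_radialPotential_add_sub hg hM x)
      ((innerSL ℝ).continuous.comp ((continuous_radialField hg hg0).comp
        (continuous_const_add x))).aestronglyMeasurable ?_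
      (integrable_const M) (.of_forall fun y x' _ => ?_)
    · exact .of_forall fun _ _ _ => by
        rw [innerSL_apply_norm]; exact (norm_radialField_le g _).trans (hM _)
    · rw [innerSL_radialField]
      exact ((hasFDerivAt_radialPotential hg hg0 (x' + y)).comp x'
        ((hasFDerivAt_id x').add_const y)).sub_const _
  rwa [VField, ← ContinuousLinearMap.integral_comp_commSL (by simp) _
    (integrable_radialField_add hg hg0 hM x)]

end VFieldPotential

section Coercivity

variable {n : ℕ} {g : ℝ → ℝ} {M c R : ℝ} {μ : Measure (EuclideanSpace ℝ (Fin n))}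
  [IsFiniteMeasure μ]

theorem vFieldPotential_ge (hg : Continuous g) (hM : ∀ t, |g t| ≤ M) (hc : 0 ≤ c) (hR : 0 ≤ R)
    (hcg : ∀ t, R ≤ t → c ≤ g t) (ρ : ℝ) (x : EuclideanSpace ℝ (Fin n)) :
    (c * μ.real (closedBall 0 ρ) - M * μ.real (closedBall 0 ρ)ᶜ) * ‖x‖
      - (c + M) * (R + ρ) * μ.real (closedBall 0 ρ) ≤ vFieldPotential g μ x := by
  set B := closedBall (0 : EuclideanSpace ℝ (Fin n)) ρ
  have hint := integrable_radialPotential_add_sub (μ := μ) hg hM x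
  have hB : (c * ‖x‖ - (c + M) * (R + ρ)) * μ.real B
      ≤ ∫ y in B, (radialPotential g (x + y) - radialPotential g y) ∂μ := by
    refine setIntegral_ge_of_const_le_real measurableSet_closedBall (measure_ne_top μ _)
      (fun y hy => ?_) hint.integrableOn
    rw [mem_closedBall_zero_iff] at hy
    have hfar := mul_sub_le_primitive hg hM hc hR hcg (norm_nonneg (x + y))
    have hnear := abs_primitive_sub_le hg hM ‖y‖ 0
    simp only [intervalIntegral.integral_same, sub_zero, abs_norm] at hnear
    have htri : ‖x‖ ≤ ‖x + y‖ + ‖y‖ := by simpa using norm_sub_le (x + y) y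
    have hM0 : 0 ≤ M := (abs_nonneg _).trans (hM 0)
    simp only [radialPotential]
    linarith [(abs_le.1 hnear).2, mul_le_mul_of_nonneg_left htri hc,
      mul_le_mul_of_nonneg_left hy hc, mul_le_mul_of_nonneg_left hy hM0]
  have hBc : -(M * ‖x‖) * μ.real Bᶜ
      ≤ ∫ y in Bᶜ, (radialPotential g (x + y) - radialPotential g y) ∂μ :=
    setIntegral_ge_of_const_le_real measurableSet_closedBall.compl (measure_ne_top μ _)
      (fun y _ => (abs_le.1 (abs_radialPotential_add_sub_le hg hM x y)).1) hint.integrableOn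
  calc _ = (c * ‖x‖ - (c + M) * (R + ρ)) * μ.real B + -(M * ‖x‖) * μ.real Bᶜ := by ring
    _ ≤ _ := add_le_add hB hBc
    _ = vFieldPotential g μ x := integral_add_compl measurableSet_closedBall hint

variable [NeZero μ]

theorem tendsto_vFieldPotential_cocompact (hg : Continuous g) (hM : ∀ t, |g t| ≤ M) (hc : 0 < c)
    (hR : 0 ≤ R) (hcg : ∀ t, R ≤ t → c ≤ g t) :
    Tendsto (vFieldPotential g μ) (cocompact _) atTop := by
  have hM0 : 0 ≤ M := (abs_nonneg _).trans (hM 0)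
  -- the slope `c μ(B) - M μ(Bᶜ) = c μ(univ) - (c + M) μ(Bᶜ)` is positive once
  -- `μ(Bᶜ) < c μ(univ) / (c + M)`
  obtain ⟨ρ, hρ⟩ := ((tendsto_measureReal_compl_closedBall_atTop μ 0).eventually
    (gt_mem_nhds (div_pos (mul_pos hc (measureReal_univ_pos (μ := μ)))
      (add_pos_of_pos_of_nonneg hc hM0)))).exists
  have ha : 0 < c * μ.real (closedBall 0 ρ) - M * μ.real (closedBall 0 ρ)ᶜ := by
    have hsplit := measureReal_add_measureReal_compl (μ := μ)
      (measurableSet_closedBall (x := 0) (ε := ρ))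
    rw [lt_div_iff₀ (by linarith)] at hρ
    nlinarith
  exact tendsto_atTop_mono (vFieldPotential_ge hg hM hc.le hR hcg ρ)
    (tendsto_atTop_add_const_right _ _ (tendsto_norm_cocompact_atTop.const_mul_atTop ha))

theorem exists_vField_eq_zero (hg : Continuous g) (hg0 : g 0 = 0) (hM : ∀ t, |g t| ≤ M)
    (hc : 0 < c) (hR : 0 ≤ R) (hcg : ∀ t, R ≤ t → c ≤ g t) :
    ∃ x, VField g μ x = 0 := by
  have hW := hasFDerivAt_vFieldPotential (μ := μ) hg hg0 hM
  have hWc : Continuous (vFieldPotential g μ) :=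
    Differentiable.continuous fun x => (hW x).differentiableAt
  obtain ⟨x₀, hmin⟩ := hWc.exists_forall_le (tendsto_vFieldPotential_cocompact hg hM hc hR hcg)
  have hzero := IsLocalMin.hasFDerivAt_eq_zero (.of_forall hmin) (hW x₀)
  rw [← norm_eq_zero, innerSL_apply_norm, norm_eq_zero] at hzero
  exact ⟨x₀, hzero⟩

end Coercivity

theorem center_of_mass_exists_finite_measure_general {n : ℕ}
    (g : ℝ → ℝ) (hg_cont : ContinuousOn g (Ici 0)) (hg0 : g 0 = 0)
    (ginf : ℝ) (hginf_pos : 0 < ginf) (hg_lim : Tendsto g atTop (𝓝 ginf))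
    (μ : Measure (EuclideanSpace ℝ (Fin n)))
    (hμpos : 0 < μ Set.univ) (hμfin : μ Set.univ < ⊤) :
    ∃ xc : EuclideanSpace ℝ (Fin n), VField g μ xc = 0 := by
  have : IsFiniteMeasure μ := ⟨hμfin⟩
  have : NeZero μ := ⟨Measure.measure_univ_pos.1 hμpos⟩
  set g₁ : ℝ → ℝ := fun r => g (max r 0)
  have hg₁ : Continuous g₁ :=
    hg_cont.comp_continuous (continuous_id.max continuous_const) fun r => le_max_right r 0
  have hV : VField g μ = VField g₁ μ := by
    funext x
    simp only [VField, radialField, g₁, max_eq_left (norm_nonneg _)]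
  obtain ⟨M, hM⟩ := exists_abs_le_of_continuousOn_Ici_of_tendsto hg_cont hg_lim
  obtain ⟨R, hR0, hR⟩ := (atTop_basis' 0).eventually_iff.1
    (hg_lim.eventually (eventually_ge_nhds (half_lt_self hginf_pos)))
  rw [hV]
  exact exists_vField_eq_zero hg₁ (by simp [g₁, hg0]) (fun t => hM _ (le_max_right t 0))
    (half_pos hginf_pos) hR0 fun t ht => by simpa [g₁, max_eq_left (hR0.trans ht)] using hR ht

theorem center_of_mass_exists_finite_measure {n : ℕ} (hn : 1 ≤ n)
    (g : ℝ → ℝ) (hg_cont : ContinuousOn g (Ici 0)) (hg0 : g 0 = 0)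
    (ginf : ℝ) (hginf_pos : 0 < ginf) (hg_lim : Tendsto g atTop (𝓝 ginf))
    (μ : Measure (EuclideanSpace ℝ (Fin n)))
    (hμpos : 0 < μ Set.univ) (hμfin : μ Set.univ < ⊤) :
    ∃ xc : EuclideanSpace ℝ (Fin n), VField g μ xc = 0 :=
  center_of_mass_exists_finite_measure_general g hg_cont hg0 ginf hginf_pos hg_lim μ hμpos hμfin
end

section
/- If g is strictly increasing on [0,∞) (with g(0) = 0, so g(r) > 0 for r > 0), then the function Γ(x) = G(|x|) is strictly convex on ℝⁿ. If g is merely increasing (nondecreasing) with g(r) > 0 for all r > 0, then Γ is convex on ℝⁿ, and Γ is strictly convex along every affine line that does not pass through the origin. -/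
/-!
Since `G' = g`, the profile `G` is strictly increasing on `[0, ∞)` when `g > 0` on `(0, ∞)`,
and convex (strictly convex) when `g` is increasing (strictly increasing); composing with the
convex norm makes `Γ` convex. For strictness between `x ≠ y`: if `|x| ≠ |y|` the strict
convexity of `G` applies, while if `|x| = |y|` the open chord lies strictly inside the ball of a
strictly convex space. On a line `t ↦ a + t b` avoiding the origin, `a` and `b` are linearly
independent, so two distinct points of the line never lie on a common ray and the norm is strictly
convex along it; the strict monotonicity of `G` carries this over to `Γ`.
-/

open MeasureTheory Filter Set Topology

/-- The energy kernel `Γ(x) = G(|x|)`, where `G(r) = ∫₀^r g(s) ds`. -/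
noncomputable def Gam {n : ℕ} (g : ℝ → ℝ)
    (x : EuclideanSpace ℝ (Fin n)) : ℝ :=
  ∫ s in (0:ℝ)..‖x‖, g s

section Primitive

variable {g : ℝ → ℝ}

theorem intervalIntegrable_of_continuousOn_Ici (hg : ContinuousOn g (Ici 0)) {r : ℝ}
    (hr : 0 ≤ r) : IntervalIntegrable g volume 0 r :=
  (hg.mono Icc_subset_Ici_self).intervalIntegrable_of_Icc hr

theorem continuousOn_Ici_primitive (hg : ContinuousOn g (Ici 0)) :
    ContinuousOn (fun r => ∫ s in (0:ℝ)..r, g s) (Ici 0) := by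
  intro r (hr : 0 ≤ r)
  have hr1 : 0 ≤ r + 1 := by linarith
  have hIcc : ContinuousOn (fun r => ∫ s in (0:ℝ)..r, g s) (Icc 0 (r + 1)) := by
    simpa only [uIcc_of_le hr1] using intervalIntegral.continuousOn_primitive_interval'
      (intervalIntegrable_of_continuousOn_Ici hg hr1) left_mem_uIcc
  refine (hIcc r ⟨hr, by linarith⟩).mono_of_mem_nhdsWithin ?_
  rw [← Ici_inter_Iic]
  exact inter_mem_nhdsWithin _ (Iic_mem_nhds (lt_add_one r))

theorem hasDerivAt_primitive_of_pos (hg : ContinuousOn g (Ici 0)) {r : ℝ} (hr : 0 < r) :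
    HasDerivAt (fun r => ∫ s in (0:ℝ)..r, g s) (g r) r :=
  intervalIntegral.integral_hasDerivAt_right (intervalIntegrable_of_continuousOn_Ici hg hr.le)
    ((hg.mono Ioi_subset_Ici_self).stronglyMeasurableAtFilter isOpen_Ioi r hr)
    (hg.continuousAt (Ici_mem_nhds hr))

theorem eqOn_deriv_primitive (hg : ContinuousOn g (Ici 0)) :
    EqOn (deriv fun r => ∫ s in (0:ℝ)..r, g s) g (interior (Ici 0)) := by
  intro r hr
  rw [interior_Ici] at hr
  exact (hasDerivAt_primitive_of_pos hg hr).deriv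

theorem strictMonoOn_primitive (hg : ContinuousOn g (Ici 0)) (hpos : ∀ r, 0 < r → 0 < g r) :
    StrictMonoOn (fun r => ∫ s in (0:ℝ)..r, g s) (Ici 0) := by
  refine strictMonoOn_of_deriv_pos (convex_Ici 0) (continuousOn_Ici_primitive hg) fun r hr => ?_
  rw [eqOn_deriv_primitive hg hr]
  exact hpos r (by rwa [interior_Ici] at hr)

theorem convexOn_primitive (hg : ContinuousOn g (Ici 0)) (hmono : MonotoneOn g (Ici 0)) :
    ConvexOn ℝ (Ici 0) (fun r => ∫ s in (0:ℝ)..r, g s) := by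
  refine ((hmono.mono interior_subset).congr (eqOn_deriv_primitive hg).symm).convexOn_of_deriv
    (convex_Ici 0) (continuousOn_Ici_primitive hg) fun r hr => ?_
  rw [interior_Ici] at hr
  exact (hasDerivAt_primitive_of_pos hg hr).differentiableAt.differentiableWithinAt

theorem strictConvexOn_primitive (hg : ContinuousOn g (Ici 0)) (hmono : StrictMonoOn g (Ici 0)) :
    StrictConvexOn ℝ (Ici 0) (fun r => ∫ s in (0:ℝ)..r, g s) :=
  ((hmono.mono interior_subset).congr (eqOn_deriv_primitive hg).symm).strictConvexOn_of_deriv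
    (convex_Ici 0) (continuousOn_Ici_primitive hg)

end Primitive

theorem convex_image_univ_of_continuous {X : Type*} [TopologicalSpace X] [PreconnectedSpace X]
    {f : X → ℝ} (hf : Continuous f) : Convex ℝ (f '' univ) := by
  rw [image_univ]
  exact (isPreconnected_range hf).ordConnected.convex

theorem image_univ_norm_subset_Ici {X E : Type*} [SeminormedAddGroup E] {f : X → E} :
    (fun x => ‖f x‖) '' univ ⊆ Ici 0 := by
  rintro _ ⟨x, -, rfl⟩
  exact norm_nonneg _

section Norm

variable {E : Type*} [NormedAddCommGroup E] [NormedSpace ℝ E] {G : ℝ → ℝ}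

theorem ConvexOn.comp_norm (hG : ConvexOn ℝ (Ici 0) G) (hG' : MonotoneOn G (Ici 0)) :
    ConvexOn ℝ univ (fun x : E => G ‖x‖) :=
  (hG.subset image_univ_norm_subset_Ici (convex_image_univ_of_continuous continuous_norm)).comp
    (convexOn_norm convex_univ) (hG'.mono image_univ_norm_subset_Ici)

theorem StrictConvexOn.comp_norm [StrictConvexSpace ℝ E] (hG : StrictConvexOn ℝ (Ici 0) G)
    (hG' : StrictMonoOn G (Ici 0)) : StrictConvexOn ℝ univ (fun x : E => G ‖x‖) := by
  refine ⟨convex_univ, fun x _ y _ hxy a b ha hb hab => ?_⟩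
  by_cases hnorm : ‖x‖ = ‖y‖
  · calc G ‖a • x + b • y‖ < G ‖x‖ :=
          hG' (norm_nonneg _) (norm_nonneg _) (norm_combo_lt_of_ne le_rfl hnorm.ge hxy ha hb hab)
      _ = a • G ‖x‖ + b • G ‖y‖ := by rw [← hnorm, Convex.combo_self hab]
  · calc G ‖a • x + b • y‖ ≤ G (a • ‖x‖ + b • ‖y‖) :=
          hG'.monotoneOn (norm_nonneg _) (by simp only [smul_eq_mul, mem_Ici]; positivity)
            ((convexOn_norm convex_univ).2 trivial trivial ha.le hb.le hab)
      _ < a • G ‖x‖ + b • G ‖y‖ := hG.2 (norm_nonneg _) (norm_nonneg _) hnorm ha hb hab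

theorem linearIndependent_pair_of_forall_add_smul_ne_zero {a b : E} (hb : b ≠ 0)
    (hline : ∀ t : ℝ, a + t • b ≠ 0) : LinearIndependent ℝ ![b, a] := by
  refine (LinearIndependent.pair_iff' hb).2 fun c hc => hline (-c) ?_
  rw [← hc, neg_smul, add_neg_cancel]

theorem strictConvexOn_norm_add_smul [StrictConvexSpace ℝ E] {a b : E} (hb : b ≠ 0)
    (hline : ∀ t : ℝ, a + t • b ≠ 0) : StrictConvexOn ℝ univ (fun t : ℝ => ‖a + t • b‖) := by
  refine ⟨convex_univ, fun s _ t _ hst p q hp hq hpq => ?_⟩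
  have hcombo : a + (p • s + q • t) • b = p • (a + s • b) + q • (a + t • b) := by
    obtain rfl : q = 1 - p := by linarith
    module
  have hray : ¬ SameRay ℝ (p • (a + s • b)) (q • (a + t • b)) := by
    intro h
    obtain ⟨r₁, r₂, hr₁, -, hr⟩ :=
      h.exists_pos (smul_ne_zero hp.ne' (hline s)) (smul_ne_zero hq.ne' (hline t))
    obtain ⟨hb_coeff, ha_coeff⟩ := (LinearIndependent.pair_iff.1
      (linearIndependent_pair_of_forall_add_smul_ne_zero hb hline))
      (r₁ * p * s - r₂ * q * t) (r₁ * p - r₂ * q) (by rw [← sub_eq_zero] at hr; rw [← hr]; module)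
    have hdiff : r₁ * p * (s - t) = 0 := by linear_combination hb_coeff - t * ha_coeff
    exact hst (by simpa [hr₁.ne', hp.ne', sub_eq_zero] using hdiff)
  calc ‖a + (p • s + q • t) • b‖ = ‖p • (a + s • b) + q • (a + t • b)‖ := by rw [hcombo]
    _ < ‖p • (a + s • b)‖ + ‖q • (a + t • b)‖ := norm_add_lt_of_not_sameRay hray
    _ = p • ‖a + s • b‖ + q • ‖a + t • b‖ := by
        rw [norm_smul_of_nonneg hp.le, norm_smul_of_nonneg hq.le, smul_eq_mul, smul_eq_mul]

theorem ConvexOn.strictConvexOn_comp_norm_add_smul [StrictConvexSpace ℝ E]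
    (hG : ConvexOn ℝ (Ici 0) G) (hG' : StrictMonoOn G (Ici 0)) {a b : E} (hb : b ≠ 0)
    (hline : ∀ t : ℝ, a + t • b ≠ 0) : StrictConvexOn ℝ univ (fun t : ℝ => G ‖a + t • b‖) :=
  (hG.subset image_univ_norm_subset_Ici
    (convex_image_univ_of_continuous (by fun_prop))).comp_strictConvexOn
    (strictConvexOn_norm_add_smul hb hline) (hG'.mono image_univ_norm_subset_Ici)

end Norm

theorem kernel_convexity_general {n : ℕ}
    (g : ℝ → ℝ) (hg_cont : ContinuousOn g (Ici 0)) (hg0 : g 0 = 0) :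
    (StrictMonoOn g (Ici 0) →
      StrictConvexOn ℝ Set.univ (Gam g (n := n))) ∧
    ((MonotoneOn g (Ici 0) ∧ ∀ r : ℝ, 0 < r → 0 < g r) →
      ConvexOn ℝ Set.univ (Gam g (n := n)) ∧
      ∀ a b : EuclideanSpace ℝ (Fin n), b ≠ 0 → (∀ t : ℝ, a + t • b ≠ 0) →
        StrictConvexOn ℝ Set.univ (fun t : ℝ => Gam g (a + t • b))) := by
  refine ⟨fun hg_smono => ?_, fun ⟨hg_mono, hg_pos⟩ => ⟨?_, fun a b hb hline => ?_⟩⟩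
  · have hg_pos : ∀ r, 0 < r → 0 < g r := fun r hr =>
      hg0 ▸ hg_smono self_mem_Ici hr.le hr
    exact (strictConvexOn_primitive hg_cont hg_smono).comp_norm
      (strictMonoOn_primitive hg_cont hg_pos)
  · exact (convexOn_primitive hg_cont hg_mono).comp_norm
      (strictMonoOn_primitive hg_cont hg_pos).monotoneOn
  · exact (convexOn_primitive hg_cont hg_mono).strictConvexOn_comp_norm_add_smul
      (strictMonoOn_primitive hg_cont hg_pos) hb hline

theorem kernel_convexity {n : ℕ} (hn : 1 ≤ n)
    (g : ℝ → ℝ) (hg_cont : ContinuousOn g (Ici 0)) (hg0 : g 0 = 0) :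
    (StrictMonoOn g (Ici 0) →
      StrictConvexOn ℝ Set.univ (Gam g (n := n))) ∧
    ((MonotoneOn g (Ici 0) ∧ ∀ r : ℝ, 0 < r → 0 < g r) →
      ConvexOn ℝ Set.univ (Gam g (n := n)) ∧
      ∀ a b : EuclideanSpace ℝ (Fin n), b ≠ 0 → (∀ t : ℝ, a + t • b ≠ 0) →
        StrictConvexOn ℝ Set.univ (fun t : ℝ => Gam g (a + t • b))) :=
  kernel_convexity_general g hg_cont hg0
end
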